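/- Suppose Y is a real symmetric n×n matrix, M is a real r×n matrix, 𝚫 is a set of real p×q matrices, P is a real symmetric (q+p)×(q+p) matrix satisfying the multiplier property for 𝚫, and LMI (1b) holds. Then for every Δ ∈ 𝚫 the matrix I_q − D₁₁Δ is invertible; i.e., the uncertain feedback interconnection is well posed for all admissible uncertainties. -/

import Mathlib

/-! If `1 - D₁₁ Δ` were singular, take `v ≠ 0` with `vᵀ D₁₁ Δ = vᵀ` and put `w := -D₁₁ᵀ v`,
`z := (v, w)`. Then `z = [-Δᵀ; I] w`, so the multiplier property gives `zᵀ P z ≤ 0`. On the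
other hand, evaluating LMI (1b) at `(0, v)` annihilates the `[[0, I], [I, 0]]` block, because
the first component of `T (0, v)` vanishes, and leaves exactly `zᵀ P z > 0`. -/

open Matrix

noncomputable section

/-- A real square matrix is Hurwitz if every eigenvalue of the associated
complex matrix has negative real part. -/
def IsHurwitz {k : ℕ} (A : Matrix (Fin k) (Fin k) ℝ) : Prop :=
  ∀ μ ∈ spectrum ℂ (A.map Complex.ofReal), μ.re < 0

/-- Multiplier property: `[−Δᵀ; I_p]ᵀ P [−Δᵀ; I_p] ≺ 0` for every `Δ` in the set. -/
def MultProp {p q : ℕ} (P : Matrix (Fin q ⊕ Fin p) (Fin q ⊕ Fin p) ℝ)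
    (Δs : Set (Matrix (Fin p) (Fin q) ℝ)) : Prop :=
  ∀ Δ ∈ Δs,
    (-((fromRows (-Δᵀ) (1 : Matrix (Fin p) (Fin p) ℝ))ᵀ * P *
        fromRows (-Δᵀ) (1 : Matrix (Fin p) (Fin p) ℝ))).PosDef

/-- LMI (1b): `Tᵀ · blkdiag([[0, I],[I, 0]], P) · T ≻ 0` with the block rows
`[I, 0]`, `[−Āᵀ, −C̄₁ᵀ]`, `[0, I]`, `[−B₁ᵀ, −D₁₁ᵀ]` of `T`. -/
def LMI1b {n p q r : ℕ} (A : Matrix (Fin n) (Fin n) ℝ) (B₁ : Matrix (Fin n) (Fin p) ℝ)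
    (B₃ : Matrix (Fin n) (Fin r) ℝ) (C₁ : Matrix (Fin q) (Fin n) ℝ)
    (D₁₁ : Matrix (Fin q) (Fin p) ℝ) (D₁₃ : Matrix (Fin q) (Fin r) ℝ)
    (Y : Matrix (Fin n) (Fin n) ℝ) (M : Matrix (Fin r) (Fin n) ℝ)
    (P : Matrix (Fin q ⊕ Fin p) (Fin q ⊕ Fin p) ℝ) : Prop :=
  let Ab := A * Y + B₃ * M
  let Cb₁ := C₁ * Y + D₁₃ * M
  let T : Matrix ((Fin n ⊕ Fin n) ⊕ (Fin q ⊕ Fin p)) (Fin n ⊕ Fin q) ℝ :=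
    fromRows (fromBlocks 1 0 (-Abᵀ) (-Cb₁ᵀ)) (fromBlocks 0 1 (-B₁ᵀ) (-D₁₁ᵀ))
  let Mid : Matrix ((Fin n ⊕ Fin n) ⊕ (Fin q ⊕ Fin p)) ((Fin n ⊕ Fin n) ⊕ (Fin q ⊕ Fin p)) ℝ :=
    fromBlocks (fromBlocks 0 1 1 0) 0 0 P
  (Tᵀ * Mid * T).PosDef

namespace Matrix

variable {m n R : Type*} [Fintype m] [Fintype n]

theorem dotProduct_transpose_mul_mul_mulVec [CommSemiring R] (T : Matrix m n R)
    (S : Matrix m m R) (x : n → R) :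
    x ⬝ᵥ (Tᵀ * S * T) *ᵥ x = (T *ᵥ x) ⬝ᵥ S *ᵥ (T *ᵥ x) := by
  rw [← mulVec_mulVec, ← mulVec_mulVec, dotProduct_mulVec, vecMul_transpose]

theorem exists_vecMul_eq_self_of_not_isUnit_one_sub [DecidableEq n] {K : Type*} [Field K]
    {A : Matrix n n K} (hA : ¬IsUnit (1 - A)) : ∃ v ≠ 0, v ᵥ* A = v := by
  rw [isUnit_iff_isUnit_det, isUnit_iff_ne_zero, not_not, ← exists_vecMul_eq_zero_iff] at hA
  obtain ⟨v, hv0, hv⟩ := hA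
  exact ⟨v, hv0, by rwa [vecMul_sub, vecMul_one, sub_eq_zero, eq_comm] at hv⟩

end Matrix

theorem LMI1b.dotProduct_mulVec_pos {n p q r : ℕ} {A : Matrix (Fin n) (Fin n) ℝ}
    {B₁ : Matrix (Fin n) (Fin p) ℝ} {B₃ : Matrix (Fin n) (Fin r) ℝ}
    {C₁ : Matrix (Fin q) (Fin n) ℝ} {D₁₁ : Matrix (Fin q) (Fin p) ℝ}
    {D₁₃ : Matrix (Fin q) (Fin r) ℝ} {Y : Matrix (Fin n) (Fin n) ℝ}
    {M : Matrix (Fin r) (Fin n) ℝ} {P : Matrix (Fin q ⊕ Fin p) (Fin q ⊕ Fin p) ℝ}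
    (hlmi : LMI1b A B₁ B₃ C₁ D₁₁ D₁₃ Y M P) {v : Fin q → ℝ} (hv : v ≠ 0) :
    0 < (v ⊕ᵥ -(v ᵥ* D₁₁)) ⬝ᵥ P *ᵥ (v ⊕ᵥ -(v ᵥ* D₁₁)) := by
  have hx : (0 ⊕ᵥ v : Fin n ⊕ Fin q → ℝ) ≠ 0 := fun h ↦
    hv (funext fun i ↦ congrFun h (Sum.inr i))
  dsimp only [LMI1b] at hlmi
  have := hlmi.dotProduct_mulVec_pos hx
  rw [star_trivial, dotProduct_transpose_mul_mul_mulVec] at this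
  simpa [fromRows_mulVec, fromBlocks_mulVec, neg_mulVec, mulVec_transpose] using this

theorem MultProp.dotProduct_mulVec_nonpos {p q : ℕ}
    {P : Matrix (Fin q ⊕ Fin p) (Fin q ⊕ Fin p) ℝ} {Δs : Set (Matrix (Fin p) (Fin q) ℝ)}
    (hmult : MultProp P Δs) {Δ : Matrix (Fin p) (Fin q) ℝ} (hΔ : Δ ∈ Δs) (w : Fin p → ℝ) :
    (-(w ᵥ* Δ) ⊕ᵥ w) ⬝ᵥ P *ᵥ (-(w ᵥ* Δ) ⊕ᵥ w) ≤ 0 := by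
  have := (hmult Δ hΔ).posSemidef.dotProduct_mulVec_nonneg w
  rw [star_trivial, neg_mulVec, dotProduct_neg, dotProduct_transpose_mul_mul_mulVec] at this
  simpa [fromRows_mulVec, neg_mulVec, mulVec_transpose] using this

theorem stmt4_general {n p q r : ℕ}
    (A : Matrix (Fin n) (Fin n) ℝ) (B₁ : Matrix (Fin n) (Fin p) ℝ)
    (B₃ : Matrix (Fin n) (Fin r) ℝ) (C₁ : Matrix (Fin q) (Fin n) ℝ)
    (D₁₁ : Matrix (Fin q) (Fin p) ℝ) (D₁₃ : Matrix (Fin q) (Fin r) ℝ)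
    (Y : Matrix (Fin n) (Fin n) ℝ)
    (M : Matrix (Fin r) (Fin n) ℝ)
    (Δs : Set (Matrix (Fin p) (Fin q) ℝ))
    (P : Matrix (Fin q ⊕ Fin p) (Fin q ⊕ Fin p) ℝ)
    (hmult : MultProp P Δs)
    (hlmi : LMI1b A B₁ B₃ C₁ D₁₁ D₁₃ Y M P) :
    ∀ Δ ∈ Δs, IsUnit (1 - D₁₁ * Δ) := by
  intro Δ hΔ
  by_contra hsing
  obtain ⟨v, hv0, hv⟩ := exists_vecMul_eq_self_of_not_isUnit_one_sub hsing
  have hpos := hlmi.dotProduct_mulVec_pos hv0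
  have hnonpos := hmult.dotProduct_mulVec_nonpos hΔ (-(v ᵥ* D₁₁))
  rw [neg_vecMul, neg_neg, vecMul_vecMul, hv] at hnonpos
  exact hpos.not_ge hnonpos

/-- well-posedness of the uncertain interconnection for all admissible
uncertainties. -/
theorem stmt4 {n p q r : ℕ}
    (A : Matrix (Fin n) (Fin n) ℝ) (B₁ : Matrix (Fin n) (Fin p) ℝ)
    (B₃ : Matrix (Fin n) (Fin r) ℝ) (C₁ : Matrix (Fin q) (Fin n) ℝ)
    (D₁₁ : Matrix (Fin q) (Fin p) ℝ) (D₁₃ : Matrix (Fin q) (Fin r) ℝ)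
    (Y : Matrix (Fin n) (Fin n) ℝ) (hYsymm : Y.IsSymm)
    (M : Matrix (Fin r) (Fin n) ℝ)
    (Δs : Set (Matrix (Fin p) (Fin q) ℝ))
    (P : Matrix (Fin q ⊕ Fin p) (Fin q ⊕ Fin p) ℝ) (hPsymm : P.IsSymm)
    (hmult : MultProp P Δs)
    (hlmi : LMI1b A B₁ B₃ C₁ D₁₁ D₁₃ Y M P) :
    ∀ Δ ∈ Δs, IsUnit (1 - D₁₁ * Δ) :=
  stmt4_general A B₁ B₃ C₁ D₁₁ D₁₃ Y M Δs P hmult hlmi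

end
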